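/- Let k be a field of characteristic p > 0 and A an associative unital k-algebra. Then for every n ∈ ℕ the set T_n(A) = {x ∈ A : x^{p^n} ∈ KA} is a Z(A)-submodule of A: it is a k-subspace of A (in particular closed under addition) and for every z ∈ Z(A) and x ∈ T_n(A) one has z·x ∈ T_n(A). -/

import Mathlib

/-- `KA`: the `k`-linear span in `A` of all commutators `a*b - b*a`. -/
def commutatorSpan (k A : Type*) [Field k] [Ring A] [Algebra k A] : Submodule k A :=
  Submodule.span k {x : A | ∃ a b : A, x = a * b - b * a}

/-!
Jacobson's argument. Expand `(∑ i, x i) ^ p` as the sum of all words of length `p` in the `x i`.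
Modulo `KA` a word is invariant under cyclic rotation, and rotation generates a group of order
`p` acting on words whose only fixed points are the constant words `x i ^ p`; every other orbit
has `p` elements and so contributes `0` in characteristic `p`. Hence `x ↦ x ^ p` is additive
modulo `KA`; it also maps `KA` into itself, because `(a b) ^ p ≡ (b a) ^ p`. Induction on `n`
then closes `T_n(A)` under addition. Finally `z (a b - b a) = (z a) b - b (z a)` for central `z`.
-/

open MulAction Finset in
theorem IsPGroup.sum_eq_sum_fixedPoints {p : ℕ} [Fact p.Prime] {G α M : Type*} [Group G]
    [MulAction G α] [Fintype α] [DecidablePred (· ∈ fixedPoints G α)] [AddCommMonoid M]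
    (hG : IsPGroup p G) (hM : ∀ m : M, p • m = 0) (φ : α → M)
    (hφ : ∀ (g : G) x, φ (g • x) = φ x) :
    ∑ x, φ x = ∑ x with x ∈ fixedPoints G α, φ x := by
  classical
  suffices ∑ x with x ∉ fixedPoints G α, φ x = 0 by
    rw [← sum_filter_add_sum_filter_not univ (· ∈ fixedPoints G α), this, add_zero]
  rw [← sum_fiberwise _ (Quotient.mk (orbitRel G α))]
  refine sum_eq_zero fun ω _ => ?_
  obtain ⟨x₀, rfl⟩ := Quotient.exists_rep ω
  rw [filter_filter]
  by_cases hx₀ : x₀ ∈ fixedPoints G α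
  · refine sum_eq_zero fun x hx => ?_
    simp only [mem_filter, mem_univ, true_and, Quotient.eq, orbitRel_apply] at hx
    exact (hx.1 (mem_fixedPoints'.mp hx₀ x hx.2 ▸ hx₀)).elim
  have hfiber :
      ({x | x ∉ fixedPoints G α ∧ Quotient.mk (orbitRel G α) x = Quotient.mk _ x₀} : Finset α) =
        (orbit G x₀).toFinset := by
    ext x
    simp only [mem_filter, mem_univ, true_and, Quotient.eq, orbitRel_apply, Set.mem_toFinset,
      and_iff_right_iff_imp]
    exact fun hxo hx => hx₀ (mem_fixedPoints'.mp hx x₀ (mem_orbit_symm.mpr hxo) ▸ hx)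
  have hconst : ∀ x ∈ (orbit G x₀).toFinset, φ x = φ x₀ := by
    intro x hx
    obtain ⟨g, rfl⟩ := Set.mem_toFinset.mp hx
    exact hφ g x₀
  obtain ⟨k, hk⟩ := hG.card_orbit x₀
  have hk0 : k ≠ 0 := by
    rintro rfl
    exact hx₀ <| mem_fixedPoints_iff_card_orbit_eq_one.mpr <| by
      simpa [Nat.card_eq_fintype_card] using hk
  rw [hfiber, sum_congr rfl hconst, sum_const, Set.toFinset_card, ← Nat.card_eq_fintype_card, hk,
    ← Nat.succ_pred_eq_of_ne_zero hk0, pow_succ, mul_nsmul, hM]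

open Finset in
theorem Equiv.Perm.sum_eq_sum_filter_apply_eq_self {p : ℕ} [Fact p.Prime] {α M : Type*}
    [Fintype α] [DecidableEq α] [AddCommMonoid M] {σ : Equiv.Perm α} (hσ : σ ^ p = 1)
    (hM : ∀ m : M, p • m = 0) {φ : α → M} (hφ : φ ∘ σ = φ) :
    ∑ x, φ x = ∑ x with σ x = x, φ x := by
  have hG : IsPGroup p (Subgroup.zpowers σ) := IsPGroup.of_card_dvd_pow (n := 1) <| by
    rw [Nat.card_zpowers, pow_one]
    exact orderOf_dvd_of_pow_eq_one hσ
  have hfix : ∀ x, x ∈ MulAction.fixedPoints (Subgroup.zpowers σ) α ↔ σ x = x := fun x =>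
    ⟨fun h => h ⟨σ, Subgroup.mem_zpowers σ⟩,
      fun h ⟨_, ⟨n, hn⟩⟩ => hn ▸ zpow_apply_eq_self_of_apply_eq_self h n⟩
  classical
  rw [hG.sum_eq_sum_fixedPoints hM φ]
  · simp only [hfix]
  · rintro ⟨g, hg⟩ x
    obtain ⟨n, rfl⟩ := mem_powers_iff_mem_zpowers.mpr hg
    exact congrFun (Function.iterate_invariant hφ n) x

theorem Fintype.sum_pow_eq_sum_prod_ofFn {R ι : Type*} [Semiring R] [Fintype ι] (x : ι → R)
    (n : ℕ) :
    (∑ i, x i) ^ n = ∑ f : Fin n → ι, (List.ofFn fun j => x (f j)).prod := by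
  induction n with
  | zero => simp
  | succ n ih =>
    rw [pow_succ', ih, Finset.sum_mul_sum, ← Fintype.sum_prod_type',
      ← (Fin.consEquiv fun _ => ι).sum_comp]
    simp [List.ofFn_succ]

theorem Fin.comp_finRotate_eq_self_iff {n : ℕ} [NeZero n] {α : Type*} {f : Fin n → α} :
    f ∘ finRotate n = f ↔ ∃ a, (fun _ => a) = f := by
  refine ⟨fun h => ⟨f 0, funext fun i => ?_⟩, fun ⟨a, ha⟩ => ha ▸ rfl⟩
  obtain ⟨m, rfl⟩ := Nat.exists_eq_succ_of_ne_zero (NeZero.ne n)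
  induction i using Fin.induction with
  | zero => rfl
  | succ i ih =>
    rw [ih, ← Fin.coeSucc_eq_succ, ← finRotate_apply]
    exact (congrFun h i.castSucc).symm

theorem finRotate_pow_self (n : ℕ) : finRotate n ^ n = 1 := by
  obtain _ | _ | n := n
  · simp
  · rw [zero_add, pow_one, finRotate_one]
    rfl
  have h : orderOf (finRotate (n + 2)) = n + 2 := by
    rw [isCycle_finRotate.orderOf, support_finRotate, Finset.card_univ, Fintype.card_fin]
  simpa [h] using pow_orderOf_eq_one (finRotate (n + 2))

namespace commutatorSpan

variable {k A : Type*} [Field k] [Ring A] [Algebra k A]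

theorem mul_sub_mul_mem (a b : A) : a * b - b * a ∈ commutatorSpan k A :=
  Submodule.subset_span ⟨a, b, rfl⟩

theorem mkQ_mul_comm (a b : A) :
    (commutatorSpan k A).mkQ (a * b) = (commutatorSpan k A).mkQ (b * a) :=
  (Submodule.Quotient.eq _).mpr (mul_sub_mul_mem a b)

theorem mkQ_prod_ofFn_comp_finRotate {n : ℕ} (w : Fin n → A) :
    (commutatorSpan k A).mkQ (List.ofFn (w ∘ finRotate n)).prod =
      (commutatorSpan k A).mkQ (List.ofFn w).prod := by
  cases n with
  | zero => rfl
  | succ n =>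
    rw [← Fin.cons_self_tail w, Function.comp_def, ← Fin.snoc_eq_cons_rotate,
      List.ofFn_succ_last, List.ofFn_succ]
    simp only [Fin.snoc_castSucc, Fin.snoc_last, Fin.cons_zero, Fin.cons_succ, List.prod_append,
      List.prod_cons, List.prod_nil, mul_one]
    exact mkQ_mul_comm _ _

open Finset in
theorem mkQ_sum_pow_char {ι : Type*} [Fintype ι] (p : ℕ) [hp : Fact p.Prime] [CharP k p]
    (x : ι → A) :
    (commutatorSpan k A).mkQ ((∑ i, x i) ^ p) = ∑ i, (commutatorSpan k A).mkQ (x i ^ p) := by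
  classical
  let σ : Equiv.Perm (Fin p → ι) := (finRotate p).symm.arrowCongr (Equiv.refl ι)
  have hσ : σ ^ p = 1 := by
    have hpow : ∀ n f, (σ ^ n) f = f ∘ ⇑(finRotate p ^ n) := by
      intro n
      induction n with
      | zero => simp
      | succ n ih =>
        intro f
        rw [pow_succ, Equiv.Perm.mul_apply, ih, pow_succ', Equiv.Perm.coe_mul]
        rfl
    ext f i
    rw [hpow, finRotate_pow_self]
    rfl
  have hM : ∀ m : A ⧸ commutatorSpan k A, p • m = 0 := fun m => by
    rw [← Nat.cast_smul_eq_nsmul k, CharP.cast_eq_zero, zero_smul]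
  let φ (f : Fin p → ι) := (commutatorSpan k A).mkQ (List.ofFn fun j => x (f j)).prod
  have hφ : φ ∘ σ = φ := funext fun f => mkQ_prod_ofFn_comp_finRotate (x ∘ f)
  have : NeZero p := ⟨hp.out.ne_zero⟩
  have hfix : ({f | σ f = f} : Finset (Fin p → ι)) = univ.image fun i _ => i := by
    ext f
    simp only [mem_filter, mem_univ, true_and, mem_image]
    exact Fin.comp_finRotate_eq_self_iff
  rw [Fintype.sum_pow_eq_sum_prod_ofFn, map_sum,
    Equiv.Perm.sum_eq_sum_filter_apply_eq_self hσ hM hφ, hfix,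
    sum_image fun i _ j _ h => congrFun h 0]
  simp [φ, List.ofFn_const]

theorem mkQ_add_pow_char (p : ℕ) [Fact p.Prime] [CharP k p] (x y : A) :
    (commutatorSpan k A).mkQ ((x + y) ^ p) =
      (commutatorSpan k A).mkQ (x ^ p) + (commutatorSpan k A).mkQ (y ^ p) := by
  simpa using mkQ_sum_pow_char (k := k) p ![x, y]

theorem mkQ_sub_pow_char (p : ℕ) [Fact p.Prime] [CharP k p] (x y : A) :
    (commutatorSpan k A).mkQ ((x - y) ^ p) =
      (commutatorSpan k A).mkQ (x ^ p) - (commutatorSpan k A).mkQ (y ^ p) := by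
  have hneg : (-y) ^ p = -y ^ p := by
    rw [neg_pow, ← map_one (algebraMap k A), ← map_neg, ← map_pow, neg_one_pow_char, map_neg,
      map_one, neg_one_mul]
  rw [sub_eq_add_neg, mkQ_add_pow_char, hneg, map_neg, ← sub_eq_add_neg]

theorem mkQ_mul_pow_comm (a b : A) (n : ℕ) :
    (commutatorSpan k A).mkQ ((a * b) ^ n) = (commutatorSpan k A).mkQ ((b * a) ^ n) := by
  cases n with
  | zero => simp
  | succ n => rw [pow_succ', pow_succ, ← mul_assoc, mul_pow_mul, mul_assoc a, mkQ_mul_comm]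

theorem mem_iff_mkQ_eq_zero {x : A} : x ∈ commutatorSpan k A ↔ (commutatorSpan k A).mkQ x = 0 :=
  (Submodule.Quotient.mk_eq_zero _).symm

theorem pow_char_mem (p : ℕ) [hp : Fact p.Prime] [CharP k p] {c : A}
    (hc : c ∈ commutatorSpan k A) : c ^ p ∈ commutatorSpan k A := by
  induction hc using Submodule.span_induction with
  | mem _ h =>
    obtain ⟨a, b, rfl⟩ := h
    rw [mem_iff_mkQ_eq_zero, mkQ_sub_pow_char, mkQ_mul_pow_comm, sub_self]
  | zero => rw [zero_pow hp.out.ne_zero]; exact zero_mem _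
  | add c d _ _ hc hd =>
    rw [mem_iff_mkQ_eq_zero] at hc hd ⊢
    rw [mkQ_add_pow_char, hc, hd, add_zero]
  | smul r c _ hc => rw [smul_pow]; exact Submodule.smul_mem _ _ hc

theorem pow_char_pow_mem (p : ℕ) [Fact p.Prime] [CharP k p] (n : ℕ) {c : A}
    (hc : c ∈ commutatorSpan k A) : c ^ p ^ n ∈ commutatorSpan k A := by
  induction n with
  | zero => simpa using hc
  | succ n ih => rw [pow_succ, pow_mul]; exact pow_char_mem p ih

theorem add_pow_char_pow_mem (p : ℕ) [Fact p.Prime] [CharP k p] (n : ℕ) {x y : A}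
    (hx : x ^ p ^ n ∈ commutatorSpan k A) (hy : y ^ p ^ n ∈ commutatorSpan k A) :
    (x + y) ^ p ^ n ∈ commutatorSpan k A := by
  induction n generalizing x y with
  | zero => simpa using add_mem hx hy
  | succ n ih =>
    rw [pow_succ', pow_mul] at hx hy ⊢
    have hc : (x + y) ^ p - (x ^ p + y ^ p) ∈ commutatorSpan k A := by
      rw [mem_iff_mkQ_eq_zero, map_sub, map_add, mkQ_add_pow_char, sub_self]
    rw [← sub_add_cancel ((x + y) ^ p) (x ^ p + y ^ p), add_comm]
    exact ih (ih hx hy) (pow_char_pow_mem p n hc)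

theorem mul_mem_of_mem_center {z c : A} (hz : z ∈ Subalgebra.center k A)
    (hc : c ∈ commutatorSpan k A) : z * c ∈ commutatorSpan k A := by
  induction hc using Submodule.span_induction with
  | mem _ h =>
    obtain ⟨a, b, rfl⟩ := h
    rw [mul_sub, ← mul_assoc, ← mul_assoc, ← Subalgebra.mem_center_iff.mp hz b, mul_assoc b]
    exact mul_sub_mul_mem (k := k) _ _
  | zero => rw [mul_zero]; exact zero_mem _
  | add c d _ _ hc hd => rw [mul_add]; exact add_mem hc hd
  | smul r c _ hc => rw [mul_smul_comm]; exact Submodule.smul_mem _ _ hc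

end commutatorSpan

/-- For a field `k` of characteristic `p > 0`, a `k`-algebra `A` and `n ∈ ℕ`, the set
`T_n(A) = {x | x^{p^n} ∈ KA}` is a `Z(A)`-submodule of `A`: it is a `k`-subspace of `A`
(in particular closed under addition) and it is stable under multiplication by central
elements. -/
theorem Tn_is_center_submodule
    (k A : Type*) [Field k] [Ring A] [Algebra k A]
    (p : ℕ) [Fact p.Prime] [CharP k p] (n : ℕ) :
    ∃ S : Submodule k A,
      (S : Set A) = {x : A | x ^ p ^ n ∈ commutatorSpan k A} ∧
      ∀ z ∈ Subalgebra.center k A, ∀ x ∈ S, z * x ∈ S := by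
  refine ⟨{ carrier := {x | x ^ p ^ n ∈ commutatorSpan k A}
            add_mem' := commutatorSpan.add_pow_char_pow_mem p n
            zero_mem' := by
              simpa using commutatorSpan.pow_char_pow_mem p n (zero_mem (commutatorSpan k A))
            smul_mem' := fun r x hx => by
              simpa [smul_pow] using Submodule.smul_mem _ (r ^ p ^ n) hx },
    rfl, fun z hz x hx => ?_⟩
  change (z * x) ^ p ^ n ∈ commutatorSpan k A
  rw [Commute.mul_pow (Subalgebra.mem_center_iff.mp hz x).symm]
  exact commutatorSpan.mul_mem_of_mem_center (pow_mem hz _) hx
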